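/- arXiv:2506.11904 — 2 statements merged into one kernel-verified Lean document; each statement's English description precedes it below -/
import Mathlib

section
/- Let (Ω, Σ, P) be a probability space with a filtration (𝓕_t)_{t≥0}, and let (V_t), (f_t), (g_t), (h_t), (α_t) be stochastic processes taking values in [0,∞), adapted to (𝓕_t), with each V_t integrable, satisfying E[V_{t+1} | 𝓕_t] ≤ (1 + f_t) V_t + g_t − α_t h_t almost surely for every t. Suppose that almost surely Σ_{t=0}^∞ f_t < ∞, Σ_{t=0}^∞ g_t < ∞ and Σ_{t=0}^∞ α_t = ∞, and suppose there exists a Class 𝓑 function η : [0,∞) → [0,∞) such that, almost surely, h_t ≥ η(V_t) for all t. Then V_t → 0 almost surely as t → ∞. -/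
/-!
Dividing `V n` by `∏_{s<n} (1 + f s)` turns the hypothesis into
`E[W (n+1) | 𝓕 n] ≤ W n + ξ n - ζ n` with `ξ` summable and `ζ` comparable to `α h`. Then
`W n + ∑_{k<n} (ζ k - ξ k)` is bounded below by `-∑ ξ` and would be a supermartingale, but `ξ`
need not be integrable; localizing at the first time `∑ ξ` exceeds a level `a` gives a nonnegative
supermartingale, which converges a.s., and which is the unlocalized process on `{∑ ξ ≤ a}`.
Hence `V` converges and `∑ α h < ∞` a.s. A positive limit would force `h ≥ η ∘ V ≥ c > 0`
eventually, because `η` is bounded away from `0` on compact subintervals of `(0, ∞)`, and then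
`∑ α < ∞`.
-/

open MeasureTheory Filter

/-- A function `η : [0,∞) → [0,∞)` (modelled on `ℝ`) is of Class 𝓑 if `η(0) = 0`,
`η` is nonnegative on `[0,∞)`, and `inf_{ε ≤ r ≤ M} η(r) > 0` whenever `0 < ε ≤ M`. -/
def ClassB (η : ℝ → ℝ) : Prop :=
  η 0 = 0 ∧ (∀ x, 0 ≤ x → 0 ≤ η x) ∧
    ∀ ε M : ℝ, 0 < ε → ε ≤ M → 0 < sInf (η '' Set.Icc ε M)

open Finset Topology

theorem summable_and_tendsto_of_tendsto_add_sum_range {w ζ : ℕ → ℝ} {c : ℝ}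
    (hw : ∀ n, 0 ≤ w n) (hζ : ∀ n, 0 ≤ ζ n)
    (h : Tendsto (fun n => w n + ∑ k ∈ range n, ζ k) atTop (𝓝 c)) :
    Summable ζ ∧ Tendsto w atTop (𝓝 (c - ∑' k, ζ k)) := by
  have hζs : Summable ζ := by
    refine summable_of_sum_range_le hζ fun n => ge_of_tendsto h ?_
    filter_upwards [eventually_ge_atTop n] with m hm
    have := sum_le_sum_of_subset_of_nonneg (range_subset_range.2 hm) fun k _ _ => hζ k
    linarith [hw m]
  refine ⟨hζs, (h.sub hζs.hasSum.tendsto_sum_nat).congr fun n => ?_⟩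
  ring

theorem MeasureTheory.Supermartingale.exists_ae_tendsto_of_nonneg {Ω : Type*}
    {mΩ : MeasurableSpace Ω} {P : Measure Ω} [IsFiniteMeasure P] {𝓕 : Filtration ℕ mΩ}
    {X : ℕ → Ω → ℝ} (hX : Supermartingale X 𝓕 P) (hX0 : ∀ n, 0 ≤ᵐ[P] X n) :
    ∀ᵐ ω ∂P, ∃ c, Tendsto (fun n => X n ω) atTop (𝓝 c) := by
  have hbdd : ∀ n, eLpNorm ((-X) n) 1 P ≤ (∫ ω, X 0 ω ∂P).toNNReal := fun n => by
    rw [Pi.neg_apply, eLpNorm_neg, eLpNorm_one_eq_lintegral_enorm,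
      ← ofReal_integral_norm_eq_lintegral_enorm (hX.integrable n)]
    refine ENNReal.ofReal_le_ofReal ?_
    rw [integral_congr_ae ((hX0 n).mono fun ω h => Real.norm_of_nonneg h)]
    simpa using hX.setIntegral_le n.zero_le MeasurableSet.univ
  filter_upwards [hX.neg.exists_ae_tendsto_of_bdd hbdd] with ω ⟨c, hc⟩
  exact ⟨-c, by simpa using hc.neg⟩

/-- For `ξ ≥ 0`, `levelIndicator ξ a n = 1` iff `n ≤ τ := inf {k | a < ∑_{j ≤ k} ξ j}`;
so `levelIndicator ξ a (k + 1)` depends only on `ξ 0, …, ξ k`. -/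
noncomputable def levelIndicator (ξ : ℕ → ℝ) (a : ℝ) (n : ℕ) : ℝ :=
  if ∑ j ∈ range n, ξ j ≤ a then 1 else 0

section levelIndicator

variable {ξ : ℕ → ℝ} {a : ℝ}

lemma levelIndicator_nonneg (n : ℕ) : 0 ≤ levelIndicator ξ a n := by
  unfold levelIndicator; split_ifs <;> norm_num

lemma levelIndicator_le_one (n : ℕ) : levelIndicator ξ a n ≤ 1 := by
  unfold levelIndicator; split_ifs <;> norm_num

lemma levelIndicator_antitone (hξ : ∀ j, 0 ≤ ξ j) : Antitone (levelIndicator ξ a) := by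
  refine antitone_nat_of_succ_le fun n => ?_
  unfold levelIndicator
  split_ifs with h₁ h₂ <;> norm_num
  exact h₂ (le_trans (by simpa [sum_range_succ] using hξ n) h₁)

lemma levelIndicator_eq_one (hξ : ∀ j, 0 ≤ ξ j) (hs : Summable ξ) (ha : ∑' j, ξ j ≤ a)
    (n : ℕ) : levelIndicator ξ a n = 1 :=
  if_pos ((hs.sum_le_tsum _ fun j _ => hξ j).trans ha)

lemma sum_levelIndicator_mul_le (hξ : ∀ j, 0 ≤ ξ j) (ha : 0 ≤ a) (n : ℕ) :
    ∑ k ∈ range n, levelIndicator ξ a (k + 1) * ξ k ≤ a := by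
  induction n with
  | zero => simpa using ha
  | succ n ih =>
    by_cases hn : ∑ j ∈ range (n + 1), ξ j ≤ a
    · refine le_trans (sum_le_sum fun k _ => ?_) hn
      exact mul_le_of_le_one_left (hξ k) (levelIndicator_le_one _)
    · rw [sum_range_succ, levelIndicator, if_neg hn, zero_mul, add_zero]
      exact ih

lemma levelIndicator_mul_le (hξ : ∀ j, 0 ≤ ξ j) (ha : 0 ≤ a) (k : ℕ) :
    levelIndicator ξ a (k + 1) * ξ k ≤ a :=
  le_trans (single_le_sum (f := fun k => levelIndicator ξ a (k + 1) * ξ k)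
    (fun j _ => mul_nonneg (levelIndicator_nonneg _) (hξ j)) (self_mem_range_succ k))
    (sum_levelIndicator_mul_le hξ ha (k + 1))

lemma measurable_levelIndicator {Ω : Type*} {m : MeasurableSpace Ω} {ξ : ℕ → Ω → ℝ} {n : ℕ}
    (hξ : ∀ j < n, Measurable (ξ j)) : Measurable fun ω => levelIndicator (ξ · ω) a n :=
  Measurable.ite (measurableSet_le (Finset.measurable_sum _ fun j hj => hξ j (mem_range.1 hj))
    measurable_const) measurable_const measurable_const

end levelIndicator

section localizedProcess

variable {Ω : Type*} {mΩ : MeasurableSpace Ω} {P : Measure Ω} {𝓕 : Filtration ℕ mΩ}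
  {W ξ ζ : ℕ → Ω → ℝ} {a : ℝ}

noncomputable def localizedDrift (ξ ζ : ℕ → Ω → ℝ) (a : ℝ) (n : ℕ) (ω : Ω) : ℝ :=
  ∑ k ∈ range n, levelIndicator (ξ · ω) a (k + 1) * (ζ k ω - ξ k ω) + a

/-- The process `W n + ∑_{k<n} (ζ k - ξ k)` localized at `τ` and shifted by `a`, which makes it
nonnegative and all its terms integrable. -/
noncomputable def localizedProcess (W ξ ζ : ℕ → Ω → ℝ) (a : ℝ) (n : ℕ) (ω : Ω) : ℝ :=
  levelIndicator (ξ · ω) a n * W n ω + localizedDrift ξ ζ a n ω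

lemma localizedDrift_succ (n : ℕ) (ω : Ω) :
    localizedDrift ξ ζ a (n + 1) ω
      = localizedDrift ξ ζ a n ω + levelIndicator (ξ · ω) a (n + 1) * (ζ n ω - ξ n ω) := by
  simp only [localizedDrift, sum_range_succ]
  ring

lemma localizedProcess_nonneg (hW : ∀ n ω, 0 ≤ W n ω) (hξ : ∀ n ω, 0 ≤ ξ n ω)
    (hζ : ∀ n ω, 0 ≤ ζ n ω) (ha : 0 ≤ a) (n : ℕ) (ω : Ω) :
    0 ≤ localizedProcess W ξ ζ a n ω := by
  have hJW := mul_nonneg (levelIndicator_nonneg (ξ := (ξ · ω)) (a := a) n) (hW n ω)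
  have hJζ : 0 ≤ ∑ k ∈ range n, levelIndicator (ξ · ω) a (k + 1) * ζ k ω :=
    sum_nonneg fun k _ => mul_nonneg (levelIndicator_nonneg _) (hζ k ω)
  have hJξ := sum_levelIndicator_mul_le (fun j => hξ j ω) ha n
  simp only [localizedProcess, localizedDrift, mul_sub, sum_sub_distrib]
  linarith

lemma localizedProcess_eq_of_tsum_le {ω : Ω} (hξ : ∀ n, 0 ≤ ξ n ω)
    (hs : Summable (ξ · ω)) (ha : ∑' k, ξ k ω ≤ a) (n : ℕ) :
    localizedProcess W ξ ζ a n ω = W n ω + (∑ k ∈ range n, (ζ k ω - ξ k ω) + a) := by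
  simp only [localizedProcess, localizedDrift, levelIndicator_eq_one hξ hs ha, one_mul]

lemma measurable_levelIndicator_of_le (hξ : StronglyAdapted 𝓕 ξ) {n m : ℕ} (hnm : n ≤ m + 1) :
    Measurable[𝓕 m] fun ω => levelIndicator (ξ · ω) a n :=
  measurable_levelIndicator fun j hj => (hξ.stronglyMeasurable_le (by omega)).measurable

lemma measurable_localizedDrift_of_le (hξ : StronglyAdapted 𝓕 ξ) (hζ : StronglyAdapted 𝓕 ζ)
    {n m : ℕ} (hnm : n ≤ m + 1) : Measurable[𝓕 m] (localizedDrift ξ ζ a n) := by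
  refine (Finset.measurable_sum _ fun k hk => ?_).add_const a
  have hkm : k ≤ m := by have := mem_range.1 hk; omega
  exact (measurable_levelIndicator_of_le hξ (by omega)).mul
    ((hζ.stronglyMeasurable_le hkm).measurable.sub (hξ.stronglyMeasurable_le hkm).measurable)

lemma stronglyAdapted_localizedProcess (hW : StronglyAdapted 𝓕 W) (hξ : StronglyAdapted 𝓕 ξ)
    (hζ : StronglyAdapted 𝓕 ζ) : StronglyAdapted 𝓕 (localizedProcess W ξ ζ a) := fun n =>
  ((measurable_levelIndicator_of_le hξ n.le_succ).mul (hW n).measurable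
    |>.add (measurable_localizedDrift_of_le hξ hζ n.le_succ)).stronglyMeasurable

lemma integrable_levelIndicator_mul (hξ : StronglyAdapted 𝓕 ξ) (hW : ∀ n ω, 0 ≤ W n ω)
    (hWadp : StronglyAdapted 𝓕 W) (hWint : ∀ n, Integrable (W n) P) (n : ℕ) :
    Integrable (fun ω => levelIndicator (ξ · ω) a n * W n ω) P := by
  refine (hWint n).mono'
    (((measurable_levelIndicator_of_le hξ n.le_succ).mul (hWadp n).measurable).mono (𝓕.le n)
      le_rfl).aestronglyMeasurable (ae_of_all _ fun ω => ?_)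
  rw [Real.norm_of_nonneg (mul_nonneg (levelIndicator_nonneg _) (hW n ω))]
  exact mul_le_of_le_one_left (hW n ω) (levelIndicator_le_one _)

lemma ae_le_add_of_condExp_le (hW : ∀ n ω, 0 ≤ W n ω)
    (hle : ∀ n, ∀ᵐ ω ∂P, P[W (n + 1)|𝓕 n] ω ≤ W n ω + ξ n ω - ζ n ω) (n : ℕ) :
    ∀ᵐ ω ∂P, ζ n ω ≤ W n ω + ξ n ω := by
  filter_upwards [hle n, condExp_nonneg (ae_of_all _ (hW (n + 1)))] with ω h h0
  simp only [Pi.zero_apply] at h0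
  linarith

lemma integrable_localizedDrift [IsFiniteMeasure P] (hW : ∀ n ω, 0 ≤ W n ω)
    (hξ : ∀ n ω, 0 ≤ ξ n ω) (hζ : ∀ n ω, 0 ≤ ζ n ω) (hξadp : StronglyAdapted 𝓕 ξ)
    (hζadp : StronglyAdapted 𝓕 ζ) (hWint : ∀ n, Integrable (W n) P)
    (hle : ∀ n, ∀ᵐ ω ∂P, P[W (n + 1)|𝓕 n] ω ≤ W n ω + ξ n ω - ζ n ω) (ha : 0 ≤ a) (n : ℕ) :
    Integrable (localizedDrift ξ ζ a n) P := by
  refine (integrable_finsetSum _ fun k _ => ?_).add (integrable_const a)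
  refine ((hWint k).add (integrable_const a)).mono' ?_ ?_
  · exact (((measurable_levelIndicator_of_le hξadp le_rfl).mul
      ((hζadp k).measurable.sub (hξadp k).measurable)).mono (𝓕.le k) le_rfl).aestronglyMeasurable
  filter_upwards [ae_le_add_of_condExp_le hW hle k] with ω hζW
  set J := levelIndicator (ξ · ω) a (k + 1)
  have hJ0 : 0 ≤ J := levelIndicator_nonneg _
  have hJW : J * W k ω ≤ W k ω := mul_le_of_le_one_left (hW k ω) (levelIndicator_le_one _)
  have hJξ : J * ξ k ω ≤ a := levelIndicator_mul_le (hξ · ω) ha k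
  have hJζ : J * ζ k ω ≤ J * W k ω + J * ξ k ω := mul_add J _ _ ▸ mul_le_mul_of_nonneg_left hζW hJ0
  rw [Real.norm_eq_abs, mul_sub, abs_sub_le_iff, Pi.add_apply]
  constructor <;> linarith [mul_nonneg hJ0 (hζ k ω), mul_nonneg hJ0 (hξ k ω), hW k ω]

lemma condExp_localizedProcess_succ_le [IsFiniteMeasure P] (hW : ∀ n ω, 0 ≤ W n ω)
    (hξ : ∀ n ω, 0 ≤ ξ n ω) (hζ : ∀ n ω, 0 ≤ ζ n ω) (hWadp : StronglyAdapted 𝓕 W)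
    (hξadp : StronglyAdapted 𝓕 ξ) (hζadp : StronglyAdapted 𝓕 ζ)
    (hWint : ∀ n, Integrable (W n) P)
    (hle : ∀ n, ∀ᵐ ω ∂P, P[W (n + 1)|𝓕 n] ω ≤ W n ω + ξ n ω - ζ n ω) (ha : 0 ≤ a) (n : ℕ) :
    P[localizedProcess W ξ ζ a (n + 1)|𝓕 n] ≤ᵐ[P] localizedProcess W ξ ζ a n := by
  set J : Ω → ℝ := fun ω => levelIndicator (ξ · ω) a (n + 1)
  have hJ : StronglyMeasurable[𝓕 n] J :=
    (measurable_levelIndicator_of_le hξadp le_rfl).stronglyMeasurable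
  have hR : StronglyMeasurable[𝓕 n] (localizedDrift ξ ζ a (n + 1)) :=
    (measurable_localizedDrift_of_le hξadp hζadp le_rfl).stronglyMeasurable
  have hRint := integrable_localizedDrift hW hξ hζ hξadp hζadp hWint hle ha (n + 1)
  have hce : P[localizedProcess W ξ ζ a (n + 1)|𝓕 n]
      =ᵐ[P] J * P[W (n + 1)|𝓕 n] + localizedDrift ξ ζ a (n + 1) := by
    have hsplit : localizedProcess W ξ ζ a (n + 1) = J * W (n + 1) + localizedDrift ξ ζ a (n + 1) :=
      rfl
    rw [hsplit]
    refine (condExp_add (integrable_levelIndicator_mul hξadp hW hWadp hWint (n + 1))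
      hRint _).trans ?_
    rw [condExp_of_stronglyMeasurable (𝓕.le n) hR hRint]
    refine (condExp_stronglyMeasurable_mul_of_bound (𝓕.le n) hJ (hWint _) 1
      (ae_of_all _ fun ω => ?_)).add EventuallyEq.rfl
    rw [Real.norm_of_nonneg (levelIndicator_nonneg _)]
    exact levelIndicator_le_one _
  filter_upwards [hce, hle n] with ω hce hle
  have hJ0 : 0 ≤ J ω := levelIndicator_nonneg _
  have hJmono : J ω * W n ω ≤ levelIndicator (ξ · ω) a n * W n ω :=
    mul_le_mul_of_nonneg_right (levelIndicator_antitone (fun j => hξ j ω) n.le_succ) (hW n ω)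
  rw [hce, Pi.add_apply, Pi.mul_apply, localizedProcess, localizedDrift_succ]
  linear_combination mul_le_mul_of_nonneg_left hle hJ0 + hJmono

lemma supermartingale_localizedProcess [IsFiniteMeasure P] (hW : ∀ n ω, 0 ≤ W n ω)
    (hξ : ∀ n ω, 0 ≤ ξ n ω) (hζ : ∀ n ω, 0 ≤ ζ n ω) (hWadp : StronglyAdapted 𝓕 W)
    (hξadp : StronglyAdapted 𝓕 ξ) (hζadp : StronglyAdapted 𝓕 ζ)
    (hWint : ∀ n, Integrable (W n) P)
    (hle : ∀ n, ∀ᵐ ω ∂P, P[W (n + 1)|𝓕 n] ω ≤ W n ω + ξ n ω - ζ n ω) (ha : 0 ≤ a) :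
    Supermartingale (localizedProcess W ξ ζ a) 𝓕 P :=
  supermartingale_nat (stronglyAdapted_localizedProcess hWadp hξadp hζadp)
    (fun n => (integrable_levelIndicator_mul hξadp hW hWadp hWint n).add
      (integrable_localizedDrift hW hξ hζ hξadp hζadp hWint hle ha n))
    (condExp_localizedProcess_succ_le hW hξ hζ hWadp hξadp hζadp hWint hle ha)

end localizedProcess

section RobbinsSiegmund

variable {Ω : Type*} {mΩ : MeasurableSpace Ω} {P : Measure Ω} [IsFiniteMeasure P]
  {𝓕 : Filtration ℕ mΩ}

theorem ae_tendsto_and_summable_of_condExp_le_add_sub {W ξ ζ : ℕ → Ω → ℝ}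
    (hW : ∀ n ω, 0 ≤ W n ω) (hξ : ∀ n ω, 0 ≤ ξ n ω) (hζ : ∀ n ω, 0 ≤ ζ n ω)
    (hWadp : StronglyAdapted 𝓕 W) (hξadp : StronglyAdapted 𝓕 ξ) (hζadp : StronglyAdapted 𝓕 ζ)
    (hWint : ∀ n, Integrable (W n) P)
    (hle : ∀ n, ∀ᵐ ω ∂P, P[W (n + 1)|𝓕 n] ω ≤ W n ω + ξ n ω - ζ n ω)
    (hξsum : ∀ᵐ ω ∂P, Summable (ξ · ω)) :
    ∀ᵐ ω ∂P, (∃ c, Tendsto (W · ω) atTop (𝓝 c)) ∧ Summable (ζ · ω) := by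
  have hconv : ∀ᵐ ω ∂P, ∀ a : ℕ, ∃ c, Tendsto (localizedProcess W ξ ζ a · ω) atTop (𝓝 c) :=
    ae_all_iff.2 fun a =>
      (supermartingale_localizedProcess hW hξ hζ hWadp hξadp hζadp hWint hle
        a.cast_nonneg).exists_ae_tendsto_of_nonneg
      fun n => ae_of_all _ (localizedProcess_nonneg hW hξ hζ a.cast_nonneg n)
  filter_upwards [hconv, hξsum] with ω hconv hξs
  obtain ⟨a, ha⟩ := exists_nat_ge (∑' n, ξ n ω)
  obtain ⟨c, hc⟩ := hconv a
  have hWζ : Tendsto (fun n => W n ω + ∑ k ∈ range n, ζ k ω) atTop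
      (𝓝 (c - a + ∑' k, ξ k ω)) := by
    refine ((hc.sub_const (a : ℝ)).add hξs.hasSum.tendsto_sum_nat).congr fun n => ?_
    rw [localizedProcess_eq_of_tsum_le (hξ · ω) hξs ha, sum_sub_distrib]
    ring
  obtain ⟨hζs, hWlim⟩ := summable_and_tendsto_of_tendsto_add_sum_range (hW · ω) (hζ · ω) hWζ
  exact ⟨⟨_, hWlim⟩, hζs⟩

end RobbinsSiegmund

noncomputable def growthProduct {Ω : Type*} (f : ℕ → Ω → ℝ) (n : ℕ) (ω : Ω) : ℝ :=
  ∏ s ∈ range n, (1 + f s ω)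

section growthProduct

variable {Ω : Type*} {f : ℕ → Ω → ℝ}

lemma one_le_growthProduct (hf : ∀ n ω, 0 ≤ f n ω) (n : ℕ) (ω : Ω) : 1 ≤ growthProduct f n ω :=
  one_le_prod fun s _ => le_add_of_nonneg_right (hf s ω)

lemma growthProduct_pos (hf : ∀ n ω, 0 ≤ f n ω) (n : ℕ) (ω : Ω) : 0 < growthProduct f n ω :=
  zero_lt_one.trans_le (one_le_growthProduct hf n ω)

lemma growthProduct_succ (n : ℕ) (ω : Ω) :
    growthProduct f (n + 1) ω = growthProduct f n ω * (1 + f n ω) :=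
  prod_range_succ _ n

lemma growthProduct_le_exp_tsum {ω : Ω} (hf : ∀ n, 0 ≤ f n ω) (hs : Summable (f · ω)) (n : ℕ) :
    growthProduct f n ω ≤ Real.exp (∑' s, f s ω) :=
  (Real.prod_one_add_le_exp_sum _ hf).trans
    (Real.exp_le_exp.2 (hs.sum_le_tsum _ fun s _ => hf s))

lemma tendsto_growthProduct {ω : Ω} (hs : Summable (f · ω)) :
    Tendsto (growthProduct f · ω) atTop (𝓝 (∏' s, (1 + f s ω))) :=
  (Real.multipliable_one_add_of_summable hs).hasProd.tendsto_prod_nat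

lemma measurable_growthProduct_of_le {mΩ : MeasurableSpace Ω} {𝓕 : Filtration ℕ mΩ}
    (hf : StronglyAdapted 𝓕 f) {n m : ℕ} (hnm : n ≤ m + 1) :
    Measurable[𝓕 m] (growthProduct f n) :=
  Finset.measurable_prod _ fun s hs =>
    (hf.stronglyMeasurable_le (by have := mem_range.1 hs; omega)).measurable.const_add 1

end growthProduct

section RobbinsSiegmund

variable {Ω : Type*} {mΩ : MeasurableSpace Ω} {P : Measure Ω} [IsFiniteMeasure P]
  {𝓕 : Filtration ℕ mΩ} {V f g ζ : ℕ → Ω → ℝ}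

lemma condExp_div_growthProduct_le (hf : ∀ n ω, 0 ≤ f n ω) (hfadp : StronglyAdapted 𝓕 f)
    (hVint : ∀ n, Integrable (V n) P)
    (hle : ∀ n, ∀ᵐ ω ∂P, P[V (n + 1)|𝓕 n] ω ≤ (1 + f n ω) * V n ω + g n ω - ζ n ω) (n : ℕ) :
    ∀ᵐ ω ∂P, P[fun ω => V (n + 1) ω / growthProduct f (n + 1) ω|𝓕 n] ω
      ≤ V n ω / growthProduct f n ω + g n ω / growthProduct f (n + 1) ω
        - ζ n ω / growthProduct f (n + 1) ω := by
  have hpull : P[fun ω => V (n + 1) ω / growthProduct f (n + 1) ω|𝓕 n]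
      =ᵐ[P] (growthProduct f (n + 1))⁻¹ * P[V (n + 1)|𝓕 n] := by
    have hdiv : (fun ω => V (n + 1) ω / growthProduct f (n + 1) ω)
        = (growthProduct f (n + 1))⁻¹ * V (n + 1) := by
      ext ω
      exact div_eq_inv_mul _ _
    rw [hdiv]
    refine condExp_stronglyMeasurable_mul_of_bound (𝓕.le n)
      (measurable_growthProduct_of_le hfadp le_rfl).inv.stronglyMeasurable (hVint _) 1
      (ae_of_all _ fun ω => ?_)
    rw [Pi.inv_apply, norm_inv, Real.norm_of_nonneg (growthProduct_pos hf _ ω).le]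
    exact inv_le_one_of_one_le₀ (one_le_growthProduct hf _ ω)
  filter_upwards [hpull, hle n] with ω hpull hle
  have hG := growthProduct_pos hf n ω
  have hf1 : 0 < 1 + f n ω := by linarith [hf n ω]
  rw [hpull, Pi.mul_apply, Pi.inv_apply, growthProduct_succ, ← div_eq_inv_mul,
    div_le_iff₀ (mul_pos hG hf1)]
  exact hle.trans_eq (by field_simp)

theorem ae_tendsto_and_summable_of_condExp_le_one_add_mul
    (hV : ∀ n ω, 0 ≤ V n ω) (hf : ∀ n ω, 0 ≤ f n ω) (hg : ∀ n ω, 0 ≤ g n ω)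
    (hζ : ∀ n ω, 0 ≤ ζ n ω) (hVadp : StronglyAdapted 𝓕 V) (hfadp : StronglyAdapted 𝓕 f)
    (hgadp : StronglyAdapted 𝓕 g) (hζadp : StronglyAdapted 𝓕 ζ)
    (hVint : ∀ n, Integrable (V n) P)
    (hle : ∀ n, ∀ᵐ ω ∂P, P[V (n + 1)|𝓕 n] ω ≤ (1 + f n ω) * V n ω + g n ω - ζ n ω)
    (hfsum : ∀ᵐ ω ∂P, Summable (f · ω)) (hgsum : ∀ᵐ ω ∂P, Summable (g · ω)) :
    ∀ᵐ ω ∂P, (∃ c, Tendsto (V · ω) atTop (𝓝 c)) ∧ Summable (ζ · ω) := by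
  have hG := growthProduct_pos hf
  have hdiv_le {u : ℕ → Ω → ℝ} (hu : ∀ n ω, 0 ≤ u n ω) (n m : ℕ) (ω : Ω) :
      u n ω / growthProduct f m ω ≤ u n ω :=
    div_le_self (hu n ω) (one_le_growthProduct hf _ ω)
  have hWm (n : ℕ) : Measurable[𝓕 n] fun ω => V n ω / growthProduct f n ω :=
    (hVadp n).measurable.div (measurable_growthProduct_of_le hfadp n.le_succ)
  have hdiscounted := ae_tendsto_and_summable_of_condExp_le_add_sub
    (W := fun n ω => V n ω / growthProduct f n ω)
    (ξ := fun n ω => g n ω / growthProduct f (n + 1) ω)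
    (ζ := fun n ω => ζ n ω / growthProduct f (n + 1) ω)
    (fun n ω => div_nonneg (hV n ω) (hG n ω).le) (fun n ω => div_nonneg (hg n ω) (hG _ ω).le)
    (fun n ω => div_nonneg (hζ n ω) (hG _ ω).le)
    (fun n => (hWm n).stronglyMeasurable)
    (fun n => ((hgadp n).measurable.div
      (measurable_growthProduct_of_le hfadp le_rfl)).stronglyMeasurable)
    (fun n => ((hζadp n).measurable.div
      (measurable_growthProduct_of_le hfadp le_rfl)).stronglyMeasurable)
    (fun n => (hVint n).mono' ((hWm n).mono (𝓕.le n) le_rfl).aestronglyMeasurable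
      (ae_of_all _ fun ω => (Real.norm_of_nonneg (div_nonneg (hV n ω) (hG n ω).le)).trans_le
        (hdiv_le hV n n ω)))
    (condExp_div_growthProduct_le hf hfadp hVint hle)
    (hgsum.mono fun ω hs => hs.of_nonneg_of_le (fun n => div_nonneg (hg n ω) (hG _ ω).le)
      (hdiv_le hg · _ ω))
  filter_upwards [hdiscounted, hfsum] with ω ⟨⟨c, hc⟩, hζs⟩ hfs
  refine ⟨⟨_, (hc.mul (tendsto_growthProduct hfs)).congr fun n => ?_⟩, ?_⟩
  · exact div_mul_cancel₀ _ (hG n ω).ne'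
  refine (hζs.mul_left (Real.exp (∑' s, f s ω))).of_nonneg_of_le (hζ · ω) fun n => ?_
  rw [mul_div_assoc', le_div_iff₀ (hG _ ω), mul_comm]
  exact mul_le_mul_of_nonneg_right (growthProduct_le_exp_tsum (hf · ω) hfs _) (hζ n ω)

end RobbinsSiegmund

theorem ClassB.exists_pos_eventually_le {ι : Type*} {l : Filter ι} {η : ℝ → ℝ} (hη : ClassB η)
    {v : ι → ℝ} {L : ℝ} (hv : Tendsto v l (𝓝 L)) (hL : 0 < L) :
    ∃ c > 0, ∀ᶠ i in l, c ≤ η (v i) := by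
  have hmem : Set.Icc (L / 2) (2 * L) ∈ 𝓝 L := Icc_mem_nhds (by linarith) (by linarith)
  have hbdd : BddBelow (η '' Set.Icc (L / 2) (2 * L)) :=
    ⟨0, Set.forall_mem_image.2 fun x hx => hη.2.1 x (by linarith [hx.1])⟩
  refine ⟨_, hη.2.2 (L / 2) (2 * L) (by linarith) (by linarith), ?_⟩
  filter_upwards [hv hmem] with i hi using csInf_le hbdd (Set.mem_image_of_mem η hi)

theorem ClassB.eq_zero_of_tendsto {η : ℝ → ℝ} (hη : ClassB η) {v α h : ℕ → ℝ} {L : ℝ}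
    (hv : Tendsto v atTop (𝓝 L)) (hL : 0 ≤ L) (hα0 : ∀ t, 0 ≤ α t)
    (hα : Tendsto (fun n => ∑ t ∈ range n, α t) atTop atTop)
    (hαh : Summable fun t => α t * h t) (hh : ∀ t, η (v t) ≤ h t) : L = 0 := by
  by_contra hL0
  obtain ⟨c, hc, hcη⟩ := hη.exists_pos_eventually_le hv (lt_of_le_of_ne hL (Ne.symm hL0))
  have hαsum : Summable α := by
    refine (hαh.div_const c).of_norm_bounded_eventually ?_
    rw [Nat.cofinite_eq_atTop]
    filter_upwards [hcη] with t ht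
    rw [Real.norm_of_nonneg (hα0 t), le_div_iff₀ hc]
    exact mul_le_mul_of_nonneg_left (ht.trans (hh t)) (hα0 t)
  exact not_tendsto_atTop_of_tendsto_nhds hαsum.hasSum.tendsto_sum_nat hα

/-- If `(V_t), (f_t), (g_t), (h_t), (α_t)` are nonnegative adapted processes with
`V_t` integrable, `E[V_{t+1} | 𝓕_t] ≤ (1 + f_t) V_t + g_t - α_t h_t` a.s. for every
`t`, `Σ f_t < ∞`, `Σ g_t < ∞` and `Σ α_t = ∞` a.s., and `h_t ≥ η(V_t)` a.s. for all
`t` for some Class 𝓑 function `η`, then `V_t → 0` a.s. -/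
theorem stmt_11 {Ω : Type*} {mΩ : MeasurableSpace Ω} (P : Measure Ω)
    [IsProbabilityMeasure P] (𝓕 : Filtration ℕ mΩ)
    (V f g h α : ℕ → Ω → ℝ)
    (hVnn : ∀ t ω, 0 ≤ V t ω) (hfnn : ∀ t ω, 0 ≤ f t ω)
    (hgnn : ∀ t ω, 0 ≤ g t ω) (hhnn : ∀ t ω, 0 ≤ h t ω)
    (hαnn : ∀ t ω, 0 ≤ α t ω)
    (hVadp : StronglyAdapted 𝓕 V) (hfadp : StronglyAdapted 𝓕 f)
    (hgadp : StronglyAdapted 𝓕 g) (hhadp : StronglyAdapted 𝓕 h) (hαadp : StronglyAdapted 𝓕 α)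
    (hVint : ∀ t, Integrable (V t) P)
    (hineq : ∀ t, ∀ᵐ ω ∂P,
      (P[V (t + 1)|𝓕 t]) ω ≤ (1 + f t ω) * V t ω + g t ω - α t ω * h t ω)
    (hf : ∀ᵐ ω ∂P, Summable (fun t => f t ω))
    (hg : ∀ᵐ ω ∂P, Summable (fun t => g t ω))
    (hα : ∀ᵐ ω ∂P, Tendsto (fun n => ∑ t ∈ Finset.range n, α t ω) atTop atTop)
    (η : ℝ → ℝ) (hη : ClassB η)
    (hlb : ∀ᵐ ω ∂P, ∀ t, η (V t ω) ≤ h t ω) :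
    ∀ᵐ ω ∂P, Tendsto (fun t => V t ω) atTop (nhds 0) := by
  have hRS := ae_tendsto_and_summable_of_condExp_le_one_add_mul (ζ := fun t ω => α t ω * h t ω)
    hVnn hfnn hgnn (fun t ω => mul_nonneg (hαnn t ω) (hhnn t ω)) hVadp hfadp hgadp
    (hαadp.mul hhadp) hVint hineq hf hg
  filter_upwards [hRS, hα, hlb] with ω ⟨⟨L, hL⟩, hαh⟩ hα hlb
  obtain rfl : L = 0 :=
    hη.eq_zero_of_tendsto hL (ge_of_tendsto' hL (hVnn · ω)) (hαnn · ω) hα hαh hlb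
  exact hL
end

section
/- Let (Ω, Σ, P) be a probability space with a filtration (𝓕_t)_{t≥0}, and let (V_t), (f_t), (g_t), (α_t) be stochastic processes taking values in [0,∞), adapted to (𝓕_t), with each V_t integrable, satisfying E[V_{t+1} | 𝓕_t] ≤ (1 + f_t) V_t + g_t − α_t V_t almost surely for every t, and suppose that almost surely Σ_{t=0}^∞ f_t < ∞, Σ_{t=0}^∞ g_t < ∞ and Σ_{t=0}^∞ α_t = ∞. Let λ ∈ (0, 1] be such that, almost surely: there exists a finite T > 0 with α_t − λ t^{−1} ≥ 0 for all t ≥ T, and Σ_{t=0}^∞ (t+1)^{λ} g_t < ∞ and Σ_{t=0}^∞ (α_t − λ t^{−1}) = ∞. Then t^{λ} V_t → 0 almost surely as t → ∞ (i.e., V_t = o(t^{−λ}) almost surely). -/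
/-!
With `W_t = (t+1)^λ V_t` the hypothesis becomes the Robbins–Siegmund inequality
`E[W_{t+1} | 𝓕_t] ≤ (1 + F_t) W_t + G_t - B_t W_t`, where `F_t`, `B_t` are the positive and
negative parts of the drift `((t+2)/(t+1))^λ (1 + f_t - α_t) - 1` and `G_t = (t+2)^λ g_t`.
Bernoulli's inequality `((t+2)/(t+1))^λ ≤ 1 + λ/(t+1)` gives `F_t ≤ 2 f_t` as soon as
`α_t ≥ λ/t`, and `B_t ≥ α_t - λ/(t+1) - 2 f_t`; hence `∑ F < ∞`, `∑ G < ∞` and `∑ B = ∞`.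

For the Robbins–Siegmund theorem, discount by `a_n = ∏_{s<n} (1 + F_s)⁻¹`:
`a_n W_n + ∑_{s<n} a_{s+1} (B_s W_s - G_s)` is a supermartingale. Freezing it once `∑ G`
exceeds a level `K` makes it bounded below, so it converges a.s.; on `{∑ G ≤ K}` this forces
`a_n W_n` to converge and `∑ B_s W_s < ∞`, so `∑ B = ∞` leaves `W_n → 0` as the only option.
Finally `t^λ V_t ≤ W_t`.
-/

open MeasureTheory Filter Topology Finset

theorem MeasureTheory.Supermartingale.exists_ae_tendsto_of_bddBelow {Ω : Type*}
    {mΩ : MeasurableSpace Ω} {P : Measure Ω} [IsFiniteMeasure P] {𝓕 : Filtration ℕ mΩ}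
    {X : ℕ → Ω → ℝ} (hX : Supermartingale X 𝓕 P) {c : ℝ} (hc : ∀ n ω, c ≤ X n ω) :
    ∀ᵐ ω ∂P, ∃ l, Tendsto (fun n => X n ω) atTop (𝓝 l) := by
  have hbdd (n : ℕ) : eLpNorm ((-X) n) 1 P ≤
      ENNReal.ofReal (∫ ω, X 0 ω ∂P + 2 * |c| * P.real Set.univ) := by
    rw [Pi.neg_apply, eLpNorm_neg, eLpNorm_one_eq_lintegral_enorm,
      ← ofReal_integral_norm_eq_lintegral_enorm (hX.integrable n)]
    refine ENNReal.ofReal_le_ofReal ?_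
    calc ∫ ω, ‖X n ω‖ ∂P ≤ ∫ ω, (X n ω + 2 * |c|) ∂P :=
          integral_mono (hX.integrable n).norm ((hX.integrable n).add (integrable_const _))
            fun ω => by
              rw [Real.norm_eq_abs, abs_le]
              constructor <;> linarith [hc n ω, neg_abs_le c, abs_nonneg c]
      _ = ∫ ω, X n ω ∂P + 2 * |c| * P.real Set.univ := by
          rw [integral_add (hX.integrable n) (integrable_const _), integral_const, smul_eq_mul,
            mul_comm]
      _ ≤ ∫ ω, X 0 ω ∂P + 2 * |c| * P.real Set.univ := by
          have hmono := hX.setIntegral_le (Nat.zero_le n) MeasurableSet.univ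
          rw [setIntegral_univ, setIntegral_univ] at hmono
          linarith
  filter_upwards [hX.neg.exists_ae_tendsto_of_bdd hbdd] with ω ⟨l, hl⟩
  exact ⟨-l, by simpa using hl.neg⟩

namespace RobbinsSiegmund

noncomputable def discount (F : ℕ → ℝ) (n : ℕ) : ℝ := ∏ s ∈ range n, (1 + F s)⁻¹

noncomputable def budget (G : ℕ → ℝ) (K : ℝ) (n : ℕ) : ℝ := if ∑ s ∈ range n, G s ≤ K then 1 else 0

noncomputable def compensator (w F G B : ℕ → ℝ) (K : ℝ) (n : ℕ) : ℝ :=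
  ∑ s ∈ range n, budget G K (s + 1) * discount F (s + 1) * (B s * w s - G s)

/-- The Robbins–Siegmund supermartingale, frozen by `budget` once `∑ G` exceeds `K`: this keeps
it integrable and bounded below by `-K` although nothing is assumed on the integrability of `G`. -/
noncomputable def stoppedLyapunov (w F G B : ℕ → ℝ) (K : ℝ) (n : ℕ) : ℝ :=
  budget G K n * discount F n * w n + compensator w F G B K n

variable {w F G B : ℕ → ℝ} {K : ℝ}

lemma discount_pos (hF : ∀ s, 0 ≤ F s) (n : ℕ) : 0 < discount F n :=
  prod_pos fun s _ => inv_pos.2 (by linarith [hF s])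

lemma discount_le_one (hF : ∀ s, 0 ≤ F s) (n : ℕ) : discount F n ≤ 1 :=
  prod_le_one (fun s _ => inv_nonneg.2 (by linarith [hF s]))
    fun s _ => inv_le_one_of_one_le₀ (by linarith [hF s])

lemma discount_succ_mul {n : ℕ} (hF : 0 ≤ F n) :
    discount F (n + 1) * (1 + F n) = discount F n := by
  rw [discount, prod_range_succ, mul_assoc, inv_mul_cancel₀ (by linarith), mul_one, discount]

lemma exp_neg_tsum_le_discount (hF : ∀ s, 0 ≤ F s) (hFs : Summable F) (n : ℕ) :
    Real.exp (-∑' s, F s) ≤ discount F n := by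
  rw [discount, prod_inv_distrib, Real.exp_neg]
  refine inv_anti₀ (prod_pos fun s _ => by linarith [hF s]) ?_
  calc ∏ s ∈ range n, (1 + F s) ≤ ∏ s ∈ range n, Real.exp (F s) :=
        prod_le_prod (fun s _ => by linarith [hF s]) fun s _ => by
          rw [add_comm]; exact Real.add_one_le_exp _
    _ = Real.exp (∑ s ∈ range n, F s) := (Real.exp_sum _ _).symm
    _ ≤ Real.exp (∑' s, F s) := Real.exp_le_exp.2 (hFs.sum_le_tsum _ fun s _ => hF s)

lemma budget_nonneg (n : ℕ) : 0 ≤ budget G K n := by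
  unfold budget; split_ifs <;> norm_num

lemma budget_le_one (n : ℕ) : budget G K n ≤ 1 := by
  unfold budget; split_ifs <;> norm_num

lemma budget_eq_one {n : ℕ} (h : ∑ s ∈ range n, G s ≤ K) : budget G K n = 1 := if_pos h

lemma budget_succ_le {n : ℕ} (hG : 0 ≤ G n) : budget G K (n + 1) ≤ budget G K n := by
  unfold budget
  split_ifs with h1 h2 <;> norm_num
  rw [sum_range_succ] at h1
  exact h2 (by linarith)

lemma sum_budget_mul_le (hG : ∀ s, 0 ≤ G s) (hK : 0 ≤ K) (n : ℕ) :
    ∑ s ∈ range n, budget G K (s + 1) * G s ≤ K := by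
  induction n with
  | zero => simpa using hK
  | succ n ih =>
    rw [sum_range_succ]
    by_cases h : ∑ s ∈ range (n + 1), G s ≤ K
    · have hle : ∑ s ∈ range n, budget G K (s + 1) * G s ≤ ∑ s ∈ range n, G s :=
        sum_le_sum fun s _ => mul_le_of_le_one_left (hG s) (budget_le_one _)
      rw [budget_eq_one h, one_mul]
      rw [sum_range_succ] at h
      linarith
    · simpa [budget, h] using ih

lemma neg_le_stoppedLyapunov (hw : ∀ s, 0 ≤ w s) (hF : ∀ s, 0 ≤ F s) (hG : ∀ s, 0 ≤ G s)
    (hB : ∀ s, 0 ≤ B s) (hK : 0 ≤ K) (n : ℕ) : -K ≤ stoppedLyapunov w F G B K n := by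
  have hweight : ∀ s, 0 ≤ budget G K s * discount F s := fun s =>
    mul_nonneg (budget_nonneg s) (discount_pos hF s).le
  have hgain : 0 ≤ ∑ s ∈ range n, budget G K (s + 1) * discount F (s + 1) * (B s * w s) :=
    sum_nonneg fun s _ => mul_nonneg (hweight _) (mul_nonneg (hB s) (hw s))
  have hloss : ∑ s ∈ range n, budget G K (s + 1) * discount F (s + 1) * G s ≤ K :=
    (sum_le_sum fun s _ => by
      rw [mul_right_comm]
      exact mul_le_of_le_one_right (mul_nonneg (budget_nonneg _) (hG s))
        (discount_le_one hF _)).trans (sum_budget_mul_le hG hK n)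
  have hsplit : compensator w F G B K n =
      ∑ s ∈ range n, budget G K (s + 1) * discount F (s + 1) * (B s * w s) -
        ∑ s ∈ range n, budget G K (s + 1) * discount F (s + 1) * G s := by
    rw [compensator, ← sum_sub_distrib]
    exact sum_congr rfl fun s _ => by ring
  have hcurrent := mul_nonneg (hweight n) (hw n)
  rw [stoppedLyapunov, hsplit]
  linarith

lemma abs_compensator_term_le {s : ℕ} (hw : 0 ≤ w s) (hF : ∀ s, 0 ≤ F s) (hG : ∀ s, 0 ≤ G s)
    (hB : 0 ≤ B s) (hBw : B s * w s ≤ (1 + F s) * w s + G s) :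
    |budget G K (s + 1) * discount F (s + 1) * (B s * w s - G s)| ≤ w s + |K| := by
  by_cases h : ∑ u ∈ range (s + 1), G u ≤ K
  · have hGK : G s ≤ K :=
      (single_le_sum (fun u _ => hG u) (self_mem_range_succ s)).trans h
    have ha := discount_pos hF (s + 1)
    have has := discount_le_one hF s
    have hgain : discount F (s + 1) * (B s * w s) ≤ w s + G s := by
      calc discount F (s + 1) * (B s * w s)
          ≤ discount F (s + 1) * ((1 + F s) * w s + G s) := by gcongr
        _ = discount F s * w s + discount F (s + 1) * G s := by
          rw [← discount_succ_mul (hF s)]; ring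
        _ ≤ w s + G s := by
          gcongr
          · exact mul_le_of_le_one_left hw has
          · exact mul_le_of_le_one_left (hG s) (discount_le_one hF _)
    have haG : discount F (s + 1) * G s ≤ G s :=
      mul_le_of_le_one_left (hG s) (discount_le_one hF _)
    have hgain_nn := mul_nonneg ha.le (mul_nonneg hB hw)
    have hloss_nn := mul_nonneg ha.le (hG s)
    rw [budget_eq_one h, one_mul, abs_le, mul_sub]
    constructor <;> linarith [le_abs_self K]
  · simp [budget, h, add_nonneg hw (abs_nonneg K)]

lemma stoppedLyapunov_step {n : ℕ} {y : ℝ} (hF : ∀ s, 0 ≤ F s) (hG : 0 ≤ G n) (hw : 0 ≤ w n)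
    (hy : y ≤ (1 + F n) * w n + G n - B n * w n) :
    budget G K (n + 1) * discount F (n + 1) * y + compensator w F G B K (n + 1) ≤
      stoppedLyapunov w F G B K n := by
  have hc : 0 ≤ budget G K (n + 1) * discount F (n + 1) :=
    mul_nonneg (budget_nonneg _) (discount_pos hF _).le
  calc budget G K (n + 1) * discount F (n + 1) * y + compensator w F G B K (n + 1)
      ≤ budget G K (n + 1) * discount F (n + 1) * ((1 + F n) * w n + G n - B n * w n) +
          compensator w F G B K (n + 1) := by gcongr
    _ = budget G K (n + 1) * discount F n * w n + compensator w F G B K n := by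
      rw [compensator, compensator, sum_range_succ, ← discount_succ_mul (hF n)]; ring
    _ ≤ stoppedLyapunov w F G B K n :=
      add_le_add_left (mul_le_mul_of_nonneg_right (mul_le_mul_of_nonneg_right
        (budget_succ_le hG) (discount_pos hF n).le) hw) _

lemma stoppedLyapunov_eq_of_sum_le (h : ∀ n, ∑ s ∈ range n, G s ≤ K) (n : ℕ) :
    stoppedLyapunov w F G B K n =
      discount F n * w n + ∑ s ∈ range n, discount F (s + 1) * (B s * w s - G s) := by
  simp only [stoppedLyapunov, compensator, budget_eq_one (h _), one_mul]

lemma summable_and_tendsto_of_tendsto_add_sum {u v : ℕ → ℝ} {c : ℝ} (hu : ∀ n, 0 ≤ u n)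
    (hv : ∀ n, 0 ≤ v n) (h : Tendsto (fun n => u n + ∑ s ∈ range n, v s) atTop (𝓝 c)) :
    Summable v ∧ Tendsto u atTop (𝓝 (c - ∑' s, v s)) := by
  obtain ⟨M, hM⟩ := h.bddAbove_range
  have hv' : Summable v := summable_of_sum_range_le hv fun n =>
    (le_add_of_nonneg_left (hu n)).trans (hM ⟨n, rfl⟩)
  exact ⟨hv', (h.sub hv'.tendsto_sum_tsum_nat).congr fun n => add_sub_cancel_right _ _⟩

lemma nonpos_of_tendsto_of_summable_mul {x : ℕ → ℝ} {d : ℝ} (hB : ∀ n, 0 ≤ B n)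
    (hBd : Tendsto (fun n => ∑ s ∈ range n, B s) atTop atTop) (hx : Tendsto x atTop (𝓝 d))
    (hBx : Summable fun s => B s * x s) : d ≤ 0 := by
  by_contra! hd
  have hBs : Summable B := by
    refine (hBx.mul_left (2 / d)).of_norm_bounded_eventually_nat ?_
    filter_upwards [hx.eventually (eventually_ge_nhds (half_lt_self hd))] with s hs
    calc ‖B s‖ = 2 / d * (B s * (d / 2)) := by rw [Real.norm_of_nonneg (hB s)]; field_simp
      _ ≤ 2 / d * (B s * x s) :=
        mul_le_mul_of_nonneg_left (mul_le_mul_of_nonneg_left hs (hB s)) (div_pos two_pos hd).le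
  exact not_tendsto_atTop_of_tendsto_nhds hBs.tendsto_sum_tsum_nat hBd

lemma tendsto_zero_of_tendsto_discounted {c : ℝ} (hw : ∀ s, 0 ≤ w s) (hF : ∀ s, 0 ≤ F s)
    (hG : ∀ s, 0 ≤ G s) (hB : ∀ s, 0 ≤ B s) (hFs : Summable F) (hGs : Summable G)
    (hBd : Tendsto (fun n => ∑ s ∈ range n, B s) atTop atTop)
    (h : Tendsto (fun n => discount F n * w n +
      ∑ s ∈ range n, discount F (s + 1) * (B s * w s - G s)) atTop (𝓝 c)) :
    Tendsto w atTop (𝓝 0) := by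
  set ε := Real.exp (-∑' s, F s)
  have hε : 0 < ε := Real.exp_pos _
  have hεa : ∀ n, ε ≤ discount F n := exp_neg_tsum_le_discount hF hFs
  have ha := discount_pos hF
  have ha1 := discount_le_one hF
  have hloss : Summable fun s => discount F (s + 1) * G s :=
    hGs.of_nonneg_of_le (fun s => mul_nonneg (ha _).le (hG s))
      fun s => mul_le_of_le_one_left (hG s) (ha1 _)
  obtain ⟨hgain, hconv⟩ := summable_and_tendsto_of_tendsto_add_sum
    (u := fun n => discount F n * w n) (v := fun s => discount F (s + 1) * (B s * w s))
    (fun n => mul_nonneg (ha n).le (hw n))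
    (fun s => mul_nonneg (ha _).le (mul_nonneg (hB s) (hw s)))
    ((h.add hloss.tendsto_sum_tsum_nat).congr fun n => by
      simp only [mul_sub, sum_sub_distrib]; ring)
  have hsum : Summable fun s => B s * (discount F s * w s) := by
    refine (hgain.mul_left ε⁻¹).of_nonneg_of_le
      (fun s => mul_nonneg (hB s) (mul_nonneg (ha s).le (hw s))) fun s => ?_
    rw [le_inv_mul_iff₀ hε]
    calc ε * (B s * (discount F s * w s)) ≤ ε * (B s * w s) := by
          gcongr
          · exact hB s
          · exact mul_le_of_le_one_left (hw s) (ha1 s)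
      _ ≤ discount F (s + 1) * (B s * w s) :=
          mul_le_mul_of_nonneg_right (hεa _) (mul_nonneg (hB s) (hw s))
  have hd := nonpos_of_tendsto_of_summable_mul hB hBd hconv hsum
  have hd0 := le_antisymm hd (ge_of_tendsto' hconv fun n => mul_nonneg (ha n).le (hw n))
  refine squeeze_zero hw (fun n => ?_) (by simpa [hd0] using hconv.const_mul ε⁻¹)
  rw [le_inv_mul_iff₀ hε]
  nlinarith [hεa n, hw n]

section Stochastic

variable {Ω : Type*} {mΩ : MeasurableSpace Ω} {P : Measure Ω} {𝓕 : Filtration ℕ mΩ}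
  {W F G B : ℕ → Ω → ℝ} {K : ℝ}

lemma measurable_discount (hF : Adapted 𝓕 F) {m n : ℕ} (h : m ≤ n + 1) :
    Measurable[𝓕 n] fun ω => discount (F · ω) m :=
  Finset.measurable_prod _ fun s hs =>
    (measurable_const.add (hF.measurable_le (by simp at hs; omega))).inv

lemma measurable_budget (hG : Adapted 𝓕 G) {m n : ℕ} (h : m ≤ n + 1) :
    Measurable[𝓕 n] fun ω => budget (G · ω) K m :=
  Measurable.ite (measurableSet_le (Finset.measurable_sum _ fun s hs =>
    hG.measurable_le (by simp at hs; omega)) measurable_const) measurable_const measurable_const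

lemma measurable_compensator_term (hW : Adapted 𝓕 W) (hF : Adapted 𝓕 F) (hG : Adapted 𝓕 G)
    (hB : Adapted 𝓕 B) {s n : ℕ} (h : s ≤ n) :
    Measurable[𝓕 n] fun ω =>
      budget (G · ω) K (s + 1) * discount (F · ω) (s + 1) * (B s ω * W s ω - G s ω) :=
  ((measurable_budget hG (by omega)).mul (measurable_discount hF (by omega))).mul
    (((hB.measurable_le h).mul (hW.measurable_le h)).sub (hG.measurable_le h))

lemma measurable_compensator (hW : Adapted 𝓕 W) (hF : Adapted 𝓕 F) (hG : Adapted 𝓕 G)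
    (hB : Adapted 𝓕 B) {m n : ℕ} (h : m ≤ n + 1) :
    Measurable[𝓕 n] fun ω => compensator (W · ω) (F · ω) (G · ω) (B · ω) K m :=
  Finset.measurable_sum _ fun s hs =>
    measurable_compensator_term hW hF hG hB (by simp at hs; omega)

theorem supermartingale_stoppedLyapunov [IsFiniteMeasure P]
    (hWnn : ∀ t ω, 0 ≤ W t ω) (hFnn : ∀ t ω, 0 ≤ F t ω) (hGnn : ∀ t ω, 0 ≤ G t ω)
    (hBnn : ∀ t ω, 0 ≤ B t ω) (hW : Adapted 𝓕 W) (hF : Adapted 𝓕 F) (hG : Adapted 𝓕 G)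
    (hB : Adapted 𝓕 B) (hWint : ∀ t, Integrable (W t) P)
    (hineq : ∀ t, ∀ᵐ ω ∂P,
      (P[W (t + 1)|𝓕 t]) ω ≤ (1 + F t ω) * W t ω + G t ω - B t ω * W t ω) :
    Supermartingale (fun n ω => stoppedLyapunov (W · ω) (F · ω) (G · ω) (B · ω) K n) 𝓕 P := by
  set weight : ℕ → Ω → ℝ := fun m ω => budget (G · ω) K m * discount (F · ω) m
  set comp : ℕ → Ω → ℝ := fun n ω => compensator (W · ω) (F · ω) (G · ω) (B · ω) K n
  have hweight {m n : ℕ} (h : m ≤ n + 1) : StronglyMeasurable[𝓕 n] (weight m) :=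
    ((measurable_budget hG h).mul (measurable_discount hF h)).stronglyMeasurable
  have hweight_le (m : ℕ) (ω : Ω) : ‖weight m ω‖ ≤ 1 := by
    rw [Real.norm_of_nonneg (mul_nonneg (budget_nonneg m) (discount_pos (hFnn · ω) m).le)]
    exact mul_le_one₀ (budget_le_one m) (discount_pos (hFnn · ω) m).le
      (discount_le_one (hFnn · ω) m)
  have hweightW (m n : ℕ) : Integrable (weight m * W n) P :=
    (hWint n).bdd_mul ((hweight (Nat.le_succ m)).mono (𝓕.le _)).aestronglyMeasurable
      (ae_of_all _ (hweight_le m))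
  have hBW (s : ℕ) : ∀ᵐ ω ∂P, B s ω * W s ω ≤ (1 + F s ω) * W s ω + G s ω := by
    filter_upwards [hineq s, condExp_nonneg (m := 𝓕 s) (ae_of_all P (hWnn (s + 1)))]
      with ω h h0
    linarith [h0.trans h, show (0 : Ω → ℝ) ω = 0 from rfl]
  have hcomp (n : ℕ) : Integrable (comp n) P := by
    refine integrable_finsetSum _ fun s _ => Integrable.mono' ((hWint s).add
      (integrable_const |K|)) ?_ ?_
    · exact ((measurable_compensator_term hW hF hG hB le_rfl).mono (𝓕.le s)
        le_rfl).aestronglyMeasurable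
    · filter_upwards [hBW s] with ω h
      exact abs_compensator_term_le (w := (W · ω)) (B := (B · ω)) (hWnn s ω) (hFnn · ω)
        (hGnn · ω) (hBnn s ω) h
  refine supermartingale_nat (fun n => ?_) (fun n => (hweightW n n).add (hcomp n)) fun n => ?_
  · exact (((hweight (Nat.le_succ n)).measurable.mul (hW n)).add
      (measurable_compensator hW hF hG hB (Nat.le_succ n))).stronglyMeasurable
  have hsplit : (fun ω => stoppedLyapunov (W · ω) (F · ω) (G · ω) (B · ω) K (n + 1)) =
      weight (n + 1) * W (n + 1) + comp (n + 1) := rfl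
  have hpull := condExp_mul_of_stronglyMeasurable_left (hweight (n := n) le_rfl) (hweightW _ _)
    (hWint (n + 1))
  have hcomp_meas : P[comp (n + 1)|𝓕 n] = comp (n + 1) := condExp_of_stronglyMeasurable (𝓕.le n)
    (measurable_compensator hW hF hG hB le_rfl).stronglyMeasurable (hcomp (n + 1))
  filter_upwards [condExp_add (hweightW (n + 1) (n + 1)) (hcomp (n + 1)) (𝓕 n), hpull, hineq n]
    with ω hadd hmul hω
  rw [hsplit, hadd, Pi.add_apply, hmul, hcomp_meas, Pi.mul_apply]
  exact stoppedLyapunov_step (w := (W · ω)) (B := (B · ω)) (hFnn · ω) (hGnn n ω) (hWnn n ω) hω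

theorem ae_tendsto_zero [IsFiniteMeasure P]
    (hWnn : ∀ t ω, 0 ≤ W t ω) (hFnn : ∀ t ω, 0 ≤ F t ω) (hGnn : ∀ t ω, 0 ≤ G t ω)
    (hBnn : ∀ t ω, 0 ≤ B t ω) (hW : Adapted 𝓕 W) (hF : Adapted 𝓕 F) (hG : Adapted 𝓕 G)
    (hB : Adapted 𝓕 B) (hWint : ∀ t, Integrable (W t) P)
    (hineq : ∀ t, ∀ᵐ ω ∂P,
      (P[W (t + 1)|𝓕 t]) ω ≤ (1 + F t ω) * W t ω + G t ω - B t ω * W t ω)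
    (hFs : ∀ᵐ ω ∂P, Summable (F · ω)) (hGs : ∀ᵐ ω ∂P, Summable (G · ω))
    (hBd : ∀ᵐ ω ∂P, Tendsto (fun n => ∑ t ∈ range n, B t ω) atTop atTop) :
    ∀ᵐ ω ∂P, Tendsto (W · ω) atTop (𝓝 0) := by
  have hconv : ∀ᵐ ω ∂P, ∀ K : ℕ, ∃ l,
      Tendsto (fun n => stoppedLyapunov (W · ω) (F · ω) (G · ω) (B · ω) K n) atTop (𝓝 l) :=
    ae_all_iff.2 fun K =>
      (supermartingale_stoppedLyapunov hWnn hFnn hGnn hBnn hW hF hG hB hWint hineq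
        ).exists_ae_tendsto_of_bddBelow fun n ω =>
        neg_le_stoppedLyapunov (hWnn · ω) (hFnn · ω) (hGnn · ω) (hBnn · ω) K.cast_nonneg n
  filter_upwards [hconv, hFs, hGs, hBd] with ω hX hFω hGω hBω
  -- At a level `K ≥ ∑ G ω` the budget never runs out along `ω`.
  obtain ⟨l, hl⟩ := hX ⌈∑' s, G s ω⌉₊
  have hGK (n : ℕ) : ∑ s ∈ range n, G s ω ≤ ⌈∑' s, G s ω⌉₊ :=
    (hGω.sum_le_tsum _ fun s _ => hGnn s ω).trans (Nat.le_ceil _)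
  exact tendsto_zero_of_tendsto_discounted (hWnn · ω) (hFnn · ω) (hGnn · ω) (hBnn · ω) hFω hGω
    hBω (hl.congr (stoppedLyapunov_eq_of_sum_le hGK))

end Stochastic

/-- The ratio `(t+2)^λ / (t+1)^λ` of consecutive weights of the rescaled process `(t+1)^λ V_t`. -/
noncomputable def weightRatio (lam : ℝ) (t : ℕ) : ℝ := (((t : ℝ) + 2) / ((t : ℝ) + 1)) ^ lam

noncomputable def rescaledDrift (lam : ℝ) (f α : ℕ → ℝ) (t : ℕ) : ℝ :=
  weightRatio lam t * (1 + f t - α t) - 1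

section Rate

variable {lam : ℝ} {f α : ℕ → ℝ}

lemma weightRatio_mul_rpow (t : ℕ) :
    weightRatio lam t * ((t : ℝ) + 1) ^ lam = (((t + 1 : ℕ) : ℝ) + 1) ^ lam := by
  rw [weightRatio, Real.div_rpow (by positivity) (by positivity),
    div_mul_cancel₀ _ (by positivity)]
  push_cast; ring_nf

lemma one_le_weightRatio (h0 : 0 ≤ lam) (t : ℕ) : 1 ≤ weightRatio lam t :=
  Real.one_le_rpow ((one_le_div (by positivity)).2 (by linarith)) h0

lemma weightRatio_le (h0 : 0 ≤ lam) (h1 : lam ≤ 1) (t : ℕ) :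
    weightRatio lam t ≤ 1 + lam * ((t : ℝ) + 1)⁻¹ := by
  have hsplit : ((t : ℝ) + 2) / ((t : ℝ) + 1) = 1 + ((t : ℝ) + 1)⁻¹ := by field_simp; ring
  rw [weightRatio, hsplit]
  have hinv : (0 : ℝ) ≤ ((t : ℝ) + 1)⁻¹ := by positivity
  exact rpow_one_add_le_one_add_mul_self (by linarith) h0 h1

lemma weightRatio_le_two (h0 : 0 ≤ lam) (h1 : lam ≤ 1) (t : ℕ) : weightRatio lam t ≤ 2 := by
  have : lam * ((t : ℝ) + 1)⁻¹ ≤ 1 :=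
    mul_le_one₀ h1 (by positivity) (inv_le_one_of_one_le₀ (by linarith [t.cast_nonneg (α := ℝ)]))
  linarith [weightRatio_le h0 h1 t]

lemma rescaledDrift_le (h0 : 0 ≤ lam) (h1 : lam ≤ 1) {t : ℕ} (hf : 0 ≤ f t) (hα : 0 ≤ α t) :
    rescaledDrift lam f α t ≤ 2 * f t - (α t - lam * ((t : ℝ) + 1)⁻¹) := by
  have hr1 := one_le_weightRatio h0 t
  have hr := weightRatio_le h0 h1 t
  have hr2 := weightRatio_le_two h0 h1 t
  rw [rescaledDrift]
  nlinarith [mul_le_mul_of_nonneg_right hr2 hf, mul_le_mul_of_nonneg_right hr1 hα]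

lemma sum_range_inv_succ_le (n : ℕ) :
    ∑ t ∈ range n, ((t : ℝ) + 1)⁻¹ ≤ ∑ t ∈ range n, (t : ℝ)⁻¹ + 1 := by
  -- the `t = 0` term of the right-hand side is `(0 : ℝ)⁻¹ = 0`
  have hshift := sum_range_succ' (fun t : ℕ => (t : ℝ)⁻¹) n
  rw [sum_range_succ] at hshift
  push_cast at hshift
  linarith [Nat.cast_inv_le_one n (α := ℝ), show ((0 : ℕ) : ℝ)⁻¹ = 0 by simp]

lemma summable_posPart_rescaledDrift (h0 : 0 ≤ lam) (h1 : lam ≤ 1) (hfnn : ∀ t, 0 ≤ f t)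
    (hαnn : ∀ t, 0 ≤ α t) (hf : Summable f) (hev : ∀ᶠ t : ℕ in atTop, lam * (t : ℝ)⁻¹ ≤ α t) :
    Summable fun t => (rescaledDrift lam f α t)⁺ := by
  refine (hf.mul_left 2).of_norm_bounded_eventually_nat ?_
  filter_upwards [hev, eventually_ge_atTop 1] with t hα ht
  have hinv : lam * ((t : ℝ) + 1)⁻¹ ≤ lam * (t : ℝ)⁻¹ :=
    mul_le_mul_of_nonneg_left (inv_anti₀ (by exact_mod_cast ht) (by linarith)) h0
  rw [Real.norm_of_nonneg (posPart_nonneg _)]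
  exact sup_le (by linarith [rescaledDrift_le h0 h1 (hfnn t) (hαnn t)])
    (mul_nonneg zero_le_two (hfnn t))

lemma tendsto_sum_negPart_rescaledDrift (h0 : 0 ≤ lam) (h1 : lam ≤ 1) (hfnn : ∀ t, 0 ≤ f t)
    (hαnn : ∀ t, 0 ≤ α t) (hf : Summable f)
    (hdiv : Tendsto (fun n => ∑ t ∈ range n, (α t - lam * (t : ℝ)⁻¹)) atTop atTop) :
    Tendsto (fun n => ∑ t ∈ range n, (rescaledDrift lam f α t)⁻) atTop atTop := by
  refine tendsto_atTop_mono (fun n => ?_)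
    (tendsto_atTop_add_const_right _ (-(lam + 2 * ∑' t, f t)) hdiv)
  calc ∑ t ∈ range n, (α t - lam * (t : ℝ)⁻¹) + -(lam + 2 * ∑' t, f t)
      ≤ ∑ t ∈ range n, (α t - lam * ((t : ℝ) + 1)⁻¹ - 2 * f t) := by
        simp only [sum_sub_distrib, ← mul_sum]
        nlinarith [sum_range_inv_succ_le n, hf.sum_le_tsum (range n) fun t _ => hfnn t]
    _ ≤ ∑ t ∈ range n, (rescaledDrift lam f α t)⁻ := sum_le_sum fun t _ => by
        linarith [rescaledDrift_le h0 h1 (hfnn t) (hαnn t),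
          neg_le_negPart (rescaledDrift lam f α t)]

lemma summable_rpow_succ_mul (h0 : 0 ≤ lam) (h1 : lam ≤ 1) {g : ℕ → ℝ} (hgnn : ∀ t, 0 ≤ g t)
    (hg : Summable fun t : ℕ => ((t : ℝ) + 1) ^ lam * g t) :
    Summable fun t : ℕ => (((t + 1 : ℕ) : ℝ) + 1) ^ lam * g t :=
  (hg.mul_left 2).of_nonneg_of_le (fun t => mul_nonneg (by positivity) (hgnn t)) fun t => by
    rw [← weightRatio_mul_rpow, mul_assoc]
    exact mul_le_mul_of_nonneg_right (weightRatio_le_two h0 h1 t)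
      (mul_nonneg (Real.rpow_nonneg (by positivity : (0 : ℝ) ≤ t + 1) lam) (hgnn t))

end Rate

section RateStochastic

variable {Ω : Type*} {mΩ : MeasurableSpace Ω} {P : Measure Ω} {𝓕 : Filtration ℕ mΩ}
  {V f g α : ℕ → Ω → ℝ} {lam : ℝ}

lemma measurable_rescaledDrift (hf : Adapted 𝓕 f) (hα : Adapted 𝓕 α) (t : ℕ) :
    Measurable[𝓕 t] fun ω => rescaledDrift lam (f · ω) (α · ω) t :=
  (measurable_const.mul ((measurable_const.add (hf t)).sub (hα t))).sub measurable_const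

lemma condExp_rescaled_le
    (hineq : ∀ t, ∀ᵐ ω ∂P,
      (P[V (t + 1)|𝓕 t]) ω ≤ (1 + f t ω) * V t ω + g t ω - α t ω * V t ω) (t : ℕ) :
    ∀ᵐ ω ∂P, P[fun ω => (((t + 1 : ℕ) : ℝ) + 1) ^ lam * V (t + 1) ω|𝓕 t] ω ≤
      (1 + (rescaledDrift lam (f · ω) (α · ω) t)⁺) * (((t : ℝ) + 1) ^ lam * V t ω) +
        (((t + 1 : ℕ) : ℝ) + 1) ^ lam * g t ω -
          (rescaledDrift lam (f · ω) (α · ω) t)⁻ * (((t : ℝ) + 1) ^ lam * V t ω) := by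
  filter_upwards [condExp_smul (μ := P) ((((t + 1 : ℕ) : ℝ) + 1) ^ lam) (V (t + 1)) (𝓕 t),
    hineq t] with ω hsmul hω
  have hpart : (rescaledDrift lam (f · ω) (α · ω) t)⁺ - (rescaledDrift lam (f · ω) (α · ω) t)⁻ =
      weightRatio lam t * (1 + f t ω - α t ω) - 1 := posPart_sub_negPart _
  calc P[fun ω => (((t + 1 : ℕ) : ℝ) + 1) ^ lam * V (t + 1) ω|𝓕 t] ω
      = (((t + 1 : ℕ) : ℝ) + 1) ^ lam * P[V (t + 1)|𝓕 t] ω := hsmul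
    _ ≤ (((t + 1 : ℕ) : ℝ) + 1) ^ lam * ((1 + f t ω) * V t ω + g t ω - α t ω * V t ω) :=
        mul_le_mul_of_nonneg_left hω (by positivity)
    _ = _ := by
      linear_combination (-((t : ℝ) + 1) ^ lam * V t ω) * hpart -
        ((1 + f t ω - α t ω) * V t ω) * weightRatio_mul_rpow (lam := lam) t

end RateStochastic

end RobbinsSiegmund

open RobbinsSiegmund

theorem stmt_12_general {Ω : Type*} {mΩ : MeasurableSpace Ω} (P : Measure Ω)
    [IsProbabilityMeasure P] (𝓕 : Filtration ℕ mΩ)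
    (V f g α : ℕ → Ω → ℝ)
    (hVnn : ∀ t ω, 0 ≤ V t ω) (hfnn : ∀ t ω, 0 ≤ f t ω)
    (hgnn : ∀ t ω, 0 ≤ g t ω) (hαnn : ∀ t ω, 0 ≤ α t ω)
    (hVadp : Adapted 𝓕 V) (hfadp : Adapted 𝓕 f)
    (hgadp : Adapted 𝓕 g) (hαadp : Adapted 𝓕 α)
    (hVint : ∀ t, Integrable (V t) P)
    (hineq : ∀ t, ∀ᵐ ω ∂P,
      (P[V (t + 1)|𝓕 t]) ω ≤ (1 + f t ω) * V t ω + g t ω - α t ω * V t ω)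
    (hf : ∀ᵐ ω ∂P, Summable (fun t => f t ω))
    (lam : ℝ) (hlam : lam ∈ Set.Ioc (0 : ℝ) 1)
    (hev : ∀ᵐ ω ∂P, ∃ T : ℕ, 0 < T ∧ ∀ t ≥ T, lam * (t : ℝ)⁻¹ ≤ α t ω)
    (hg' : ∀ᵐ ω ∂P, Summable (fun t : ℕ => ((t : ℝ) + 1) ^ lam * g t ω))
    (hdiv : ∀ᵐ ω ∂P,
      Tendsto (fun n => ∑ t ∈ Finset.range n, (α t ω - lam * (t : ℝ)⁻¹)) atTop atTop) :
    ∀ᵐ ω ∂P, Tendsto (fun t : ℕ => (t : ℝ) ^ lam * V t ω) atTop (nhds 0) := by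
  obtain ⟨hlam0, hlam1⟩ := hlam
  have hdrift := measurable_rescaledDrift (lam := lam) hfadp hαadp
  have hW := ae_tendsto_zero (W := fun t ω => ((t : ℝ) + 1) ^ lam * V t ω)
    (F := fun t ω => (rescaledDrift lam (f · ω) (α · ω) t)⁺)
    (G := fun t ω => (((t + 1 : ℕ) : ℝ) + 1) ^ lam * g t ω)
    (B := fun t ω => (rescaledDrift lam (f · ω) (α · ω) t)⁻)
    (fun t ω => mul_nonneg (by positivity) (hVnn t ω)) (fun _ _ => posPart_nonneg _)
    (fun t ω => mul_nonneg (by positivity) (hgnn t ω)) (fun _ _ => negPart_nonneg _)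
    (fun t => measurable_const.mul (hVadp t)) (fun t => by have := hdrift t; fun_prop)
    (fun t => measurable_const.mul (hgadp t)) (fun t => by have := hdrift t; fun_prop)
    (fun t => (hVint t).const_mul _) (condExp_rescaled_le hineq)
    (by
      filter_upwards [hf, hev] with ω hfω hevω
      obtain ⟨T, -, hT⟩ := hevω
      exact summable_posPart_rescaledDrift hlam0.le hlam1 (hfnn · ω) (hαnn · ω) hfω
        (eventually_atTop.2 ⟨T, hT⟩))
    (by
      filter_upwards [hg'] with ω hgω
      exact summable_rpow_succ_mul hlam0.le hlam1 (hgnn · ω) hgω)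
    (by
      filter_upwards [hf, hdiv] with ω hfω hdivω
      exact tendsto_sum_negPart_rescaledDrift hlam0.le hlam1 (hfnn · ω) (hαnn · ω) hfω hdivω)
  filter_upwards [hW] with ω hω
  exact squeeze_zero (fun t => mul_nonneg (by positivity) (hVnn t ω))
    (fun t => mul_le_mul_of_nonneg_right
      (Real.rpow_le_rpow t.cast_nonneg (by linarith) hlam0.le) (hVnn t ω)) hω

/-- Rate-of-convergence version of the Robbins–Siegmund theorem: if
`E[V_{t+1} | 𝓕_t] ≤ (1 + f_t) V_t + g_t - α_t V_t` a.s. for every `t`, with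
`Σ f_t < ∞`, `Σ g_t < ∞`, `Σ α_t = ∞` a.s., and `λ ∈ (0,1]` is such that a.s.
`α_t ≥ λ/t` eventually, `Σ (t+1)^λ g_t < ∞` and `Σ (α_t - λ/t) = ∞`, then
`t^λ V_t → 0` a.s., i.e. `V_t = o(t^{-λ})` a.s. -/
theorem stmt_12 {Ω : Type*} {mΩ : MeasurableSpace Ω} (P : Measure Ω)
    [IsProbabilityMeasure P] (𝓕 : Filtration ℕ mΩ)
    (V f g α : ℕ → Ω → ℝ)
    (hVnn : ∀ t ω, 0 ≤ V t ω) (hfnn : ∀ t ω, 0 ≤ f t ω)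
    (hgnn : ∀ t ω, 0 ≤ g t ω) (hαnn : ∀ t ω, 0 ≤ α t ω)
    (hVadp : Adapted 𝓕 V) (hfadp : Adapted 𝓕 f)
    (hgadp : Adapted 𝓕 g) (hαadp : Adapted 𝓕 α)
    (hVint : ∀ t, Integrable (V t) P)
    (hineq : ∀ t, ∀ᵐ ω ∂P,
      (P[V (t + 1)|𝓕 t]) ω ≤ (1 + f t ω) * V t ω + g t ω - α t ω * V t ω)
    (hf : ∀ᵐ ω ∂P, Summable (fun t => f t ω))
    (hg : ∀ᵐ ω ∂P, Summable (fun t => g t ω))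
    (hα : ∀ᵐ ω ∂P, Tendsto (fun n => ∑ t ∈ Finset.range n, α t ω) atTop atTop)
    (lam : ℝ) (hlam : lam ∈ Set.Ioc (0 : ℝ) 1)
    (hev : ∀ᵐ ω ∂P, ∃ T : ℕ, 0 < T ∧ ∀ t ≥ T, lam * (t : ℝ)⁻¹ ≤ α t ω)
    (hg' : ∀ᵐ ω ∂P, Summable (fun t : ℕ => ((t : ℝ) + 1) ^ lam * g t ω))
    (hdiv : ∀ᵐ ω ∂P,
      Tendsto (fun n => ∑ t ∈ Finset.range n, (α t ω - lam * (t : ℝ)⁻¹)) atTop atTop) :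
    ∀ᵐ ω ∂P, Tendsto (fun t : ℕ => (t : ℝ) ^ lam * V t ω) atTop (nhds 0) :=
  stmt_12_general P 𝓕 V f g α hVnn hfnn hgnn hαnn hVadp hfadp hgadp hαadp hVint hineq hf lam hlam
    hev hg' hdiv
end
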